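/- Assume (H) and that g is C² on ℝ^{2d}. Let y be a point of Γ and α₀ > 0 with B(y,α₀) ∩ Γ = {y}. Suppose the matrix D = H₁₁g(y,y) + H₁₂g(y,y) is invertible, and let λ_y > 0 be the smallest eigenvalue of DᵀD. Set C = inf over x with ‖x−y‖ ≤ α₀ and over unit vectors u,v ∈ ℝ^d of ∫_{ℝ^d}|h·u|²|h·v| p(x,h) dh. Then for every δ > 0 there exists a neighborhood U of y such that for all x ∈ U and all s ∈ ℝ^d: sᵀ a(x) s ≥ ((C·√λ_y)/2 − δ)·‖x−y‖·‖s‖². -/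

import Mathlib

/-!
Write `w x = ∇₁g(x,x)`. Expanding the quadratic form gives
`sᵀ a(x) s = ∫ ⟪h,s⟫² [⟪h, w x⟫]₊ p(x,h) dh`, and since `p(x,·)` is even this is half of
`∫ ⟪h,s⟫² |⟪h, w x⟫| p(x,h) dh`, which by homogeneity is at least `C ‖s‖² ‖w x‖` when
`x` lies in the ball of radius `α₀`. Finally `w y = 0` and `w` is differentiable at `y` with
derivative `D`, so `‖w x‖ ≥ (√λ_y - ε) ‖x - y‖` near `y` because `√λ_y ‖v‖ ≤ ‖D v‖`.
-/

open MeasureTheory Real Set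
open scoped RealInnerProductSpace ENNReal NNReal

noncomputable section

abbrev Euc (d : ℕ) := EuclideanSpace ℝ (Fin d)

variable {d : ℕ}

/-- gradient of `g` with respect to its first variable -/
def grad1 (g : Euc d → Euc d → ℝ) (y x : Euc d) : Euc d :=
  gradient (fun z => g z x) y

/-- Hessian of `g` with respect to its first variable, as a continuous bilinear map -/
def hess11 (g : Euc d → Euc d → ℝ) (y x : Euc d) : Euc d →L[ℝ] Euc d →L[ℝ] ℝ :=
  fderiv ℝ (fderiv ℝ (fun z => g z x)) y

/-- set of evolutionary singularities -/
def Gam (g : Euc d → Euc d → ℝ) : Set (Euc d) := {x | grad1 g x x = 0}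

def GamAlpha (g : Euc d → Euc d → ℝ) (α : ℝ) : Set (Euc d) :=
  {x | α ≤ Metric.infDist x (Gam g) ∧ ‖x‖ ≤ 1 / α}

/-- `p` is a measurable symmetric probability-density kernel -/
def IsMutKernel (p : Euc d → Euc d → ℝ) : Prop :=
  Measurable (Function.uncurry p) ∧
  (∀ x h, 0 ≤ p x h) ∧
  (∀ x, Integrable (fun h => p x h)) ∧
  (∀ x, (∫ h, p x h) = 1) ∧
  (∀ x h, p x (-h) = p x h)

/-- Assumption (H2) -/
def H2 (p : Euc d → Euc d → ℝ) : Prop :=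
  (∀ x, Integrable (fun h : Euc d => ‖h‖ ^ 3 * p x h)) ∧
  (∃ M : ℝ, ∀ x, (∫ h : Euc d, ‖h‖ ^ 3 * p x h) ≤ M) ∧
  ∃ m : ℝ → ℝ, Measurable m ∧ (∀ r, 0 ≤ m r) ∧
    Integrable (fun h : Euc d => (‖h‖ ^ 2 ⊔ ‖h‖ ^ 3) * m ‖h‖) ∧
    (∀ x y h, |p x h - p y h| ≤ ‖x - y‖ * m ‖h‖) ∧
    (∀ x h, p x h ≤ m ‖h‖)

/-- Assumption (H1) -/
def H1 (g : Euc d → Euc d → ℝ) : Prop :=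
  (∀ x : Euc d, ContDiff ℝ 2 (fun z => g z x)) ∧
  (∃ C : ℝ, ∀ y x : Euc d, ‖grad1 g y x‖ ≤ C) ∧
  (∃ K : ℝ≥0, LipschitzWith K (fun q : Euc d × Euc d => grad1 g q.1 q.2)) ∧
  (∃ C : ℝ, ∀ y x : Euc d, ‖hess11 g y x‖ ≤ C) ∧
  (∃ K : ℝ≥0, LipschitzWith K (fun q : Euc d × Euc d => hess11 g q.1 q.2))

/-- drift coefficient b -/
def bCoeff (g p : Euc d → Euc d → ℝ) (x : Euc d) : Euc d :=
  (WithLp.equiv 2 (Fin d → ℝ)).symm fun k =>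
    ∫ h : Euc d, h k * max (⟪grad1 g x x, h⟫) 0 * p x h

/-- diffusion matrix a -/
def aMat (g p : Euc d → Euc d → ℝ) (x : Euc d) : Matrix (Fin d) (Fin d) ℝ :=
  Matrix.of fun k l => ∫ h : Euc d, h k * h l * max (⟪h, grad1 g x x⟫) 0 * p x h

/-- second-order drift coefficient b-tilde -/
def btCoeff (g p : Euc d → Euc d → ℝ) (x : Euc d) : Euc d :=
  (WithLp.equiv 2 (Fin d → ℝ)).symm fun k =>
    (1 / 2) * ∫ h in {h : Euc d | 0 < ⟪h, grad1 g x x⟫},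
      h k * hess11 g x x h h * p x h

/-- quadratic form sᵀ a(x) s -/
def quadA (g p : Euc d → Euc d → ℝ) (x s : Euc d) : ℝ :=
  ∑ k, ∑ l, s k * aMat g p x k l * s l

/-- quadratic form sᵀ a(x)⁻¹ s -/
def quadAInv (g p : Euc d → Euc d → ℝ) (x s : Euc d) : ℝ :=
  ∑ k, ∑ l, s k * (aMat g p x)⁻¹ k l * s l

/-- full Hessian of `g` (as a function on the product space) at `(y,x)` -/
def hessF (g : Euc d → Euc d → ℝ) (y x : Euc d) :
    (Euc d × Euc d) →L[ℝ] (Euc d × Euc d) →L[ℝ] ℝ :=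
  fderiv ℝ (fderiv ℝ (fun q : Euc d × Euc d => g q.1 q.2)) (y, x)

/-- action of a matrix on a vector of `Euc d` -/
def mulVecE (M : Matrix (Fin d) (Fin d) ℝ) (v : Euc d) : Euc d :=
  (WithLp.equiv 2 (Fin d → ℝ)).symm (M.mulVec (WithLp.equiv 2 (Fin d → ℝ) v))

theorem HasFDerivAt.eventually_sub_mul_norm_le_norm_sub {E F : Type*}
    [NormedAddCommGroup E] [NormedSpace ℝ E] [NormedAddCommGroup F] [NormedSpace ℝ F]
    {f : E → F} {L : E →L[ℝ] F} {y : E} (hf : HasFDerivAt f L y) {c ε : ℝ}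
    (hL : ∀ v, c * ‖v‖ ≤ ‖L v‖) (hε : 0 < ε) :
    ∀ᶠ x in nhds y, (c - ε) * ‖x - y‖ ≤ ‖f x - f y‖ := by
  filter_upwards [hf.isLittleO.def hε] with x hx
  have htri := norm_sub_norm_le (L (x - y)) (f x - f y)
  rw [norm_sub_rev (L (x - y))] at htri
  linarith [hL (x - y)]

section Symmetrization

variable {E : Type*} [NormedAddCommGroup E] [InnerProductSpace ℝ E] [MeasurableSpace E]
  [MeasurableNeg E] {μ : Measure E} [μ.IsNegInvariant]

theorem integral_mul_max_inner_zero_of_even {f : E → ℝ} (hf : ∀ h, f (-h) = f h) (w : E)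
    (hint : Integrable (fun h => f h * max ⟪h, w⟫ 0) μ) :
    ∫ h, f h * max ⟪h, w⟫ 0 ∂μ = (∫ h, f h * |⟪h, w⟫| ∂μ) / 2 := by
  have hreflect : (fun h => f h * max (-⟪h, w⟫) 0) = fun h => f (-h) * max ⟪-h, w⟫ 0 := by
    simp only [hf, inner_neg_left]
  have hint' : Integrable (fun h => f h * max (-⟪h, w⟫) 0) μ := hreflect ▸ hint.comp_neg
  have hneg : ∫ h, f h * max (-⟪h, w⟫) 0 ∂μ = ∫ h, f h * max ⟪h, w⟫ 0 ∂μ := by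
    rw [hreflect, integral_neg_eq_self (fun h => f h * max ⟪h, w⟫ 0) μ]
  have hsplit : ∫ h, f h * |⟪h, w⟫| ∂μ
      = ∫ h, f h * max ⟪h, w⟫ 0 ∂μ + ∫ h, f h * max (-⟪h, w⟫) 0 ∂μ := by
    rw [← integral_add hint hint']
    simp only [← mul_add, max_zero_add_max_neg_zero_eq_abs_self]
  linarith

end Symmetrization

theorem mul_le_integral_sq_inner_mul_abs_inner {E : Type*} [NormedAddCommGroup E]
    [InnerProductSpace ℝ E] [MeasurableSpace E] {μ : Measure E} {q : E → ℝ} {C : ℝ}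
    (hC : ∀ u v : E, ‖u‖ = 1 → ‖v‖ = 1 → C ≤ ∫ h, |⟪h, u⟫| ^ 2 * |⟪h, v⟫| * q h ∂μ)
    (s w : E) :
    C * (‖s‖ ^ 2 * ‖w‖) ≤ ∫ h, ⟪h, s⟫ ^ 2 * q h * |⟪h, w⟫| ∂μ := by
  rcases eq_or_ne s 0 with rfl | hs
  · simp
  rcases eq_or_ne w 0 with rfl | hw
  · simp
  have hpos : 0 < ‖s‖ ^ 2 * ‖w‖ := by positivity
  have hunit := hC (‖s‖⁻¹ • s) (‖w‖⁻¹ • w) (norm_smul_inv_norm hs) (norm_smul_inv_norm hw)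
  have hscale : ∫ h, |⟪h, ‖s‖⁻¹ • s⟫| ^ 2 * |⟪h, ‖w‖⁻¹ • w⟫| * q h ∂μ
      = (‖s‖ ^ 2 * ‖w‖)⁻¹ * ∫ h, ⟪h, s⟫ ^ 2 * q h * |⟪h, w⟫| ∂μ := by
    rw [← integral_const_mul]
    congr 1 with h
    simp only [real_inner_smul_right, abs_mul, abs_inv, abs_norm, mul_pow, sq_abs]
    ring
  rwa [hscale, le_inv_mul_iff₀ hpos, mul_comm] at hunit

lemma grad1_diag_eq (g : Euc d → Euc d → ℝ)
    (hg : Differentiable ℝ (fun q : Euc d × Euc d => g q.1 q.2)) (x : Euc d) :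
    grad1 g x x = (InnerProductSpace.toDual ℝ (Euc d)).symm
      ((fderiv ℝ (fun q : Euc d × Euc d => g q.1 q.2) (x, x)).comp
        (ContinuousLinearMap.inl ℝ (Euc d) (Euc d))) := by
  rw [grad1, gradient]
  congr 1
  exact (HasFDerivAt.comp (f := fun z : Euc d => (z, x)) x (hg (x, x)).hasFDerivAt
    (hasFDerivAt_prodMk_left x x)).fderiv

lemma hasFDerivAt_grad1_diag {g : Euc d → Euc d → ℝ}
    (hg : ContDiff ℝ 2 (fun q : Euc d × Euc d => g q.1 q.2)) (y : Euc d)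
    (L : Euc d →L[ℝ] Euc d) (hL : ∀ v w : Euc d, ⟪L v, w⟫ = hessF g y y (w, 0) (v, v)) :
    HasFDerivAt (fun x => grad1 g x x) L y := by
  set G : Euc d × Euc d → ℝ := fun q => g q.1 q.2
  have hG : Differentiable ℝ G := hg.differentiable (by norm_num)
  have hG' : HasFDerivAt (fderiv ℝ G) (hessF g y y) (y, y) :=
    ((hg.fderiv_right (m := 1) (by norm_num)).differentiable one_ne_zero (y, y)).hasFDerivAt
  have hsymm : ∀ a b, hessF g y y a b = hessF g y y b a :=
    second_derivative_symmetric_of_eventually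
      (Filter.Eventually.of_forall fun q => (hG q).hasFDerivAt) hG'
  -- `grad1 g x x` is a fixed continuous linear image of `fderiv ℝ G (x, x)`
  let Φ : (Euc d × Euc d →L[ℝ] ℝ) →L[ℝ] Euc d :=
    (InnerProductSpace.toDual ℝ (Euc d)).symm.toLinearIsometry.toContinuousLinearMap.comp
      ((ContinuousLinearMap.compL ℝ (Euc d) (Euc d × Euc d) ℝ).flip
        (ContinuousLinearMap.inl ℝ (Euc d) (Euc d)))
  let diag : Euc d →L[ℝ] Euc d × Euc d :=
    (ContinuousLinearMap.id ℝ (Euc d)).prod (ContinuousLinearMap.id ℝ (Euc d))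
  have h : HasFDerivAt (Φ ∘ fderiv ℝ G ∘ fun x => (x, x)) (Φ.comp ((hessF g y y).comp diag)) y :=
    Φ.hasFDerivAt.comp y (HasFDerivAt.comp (f := fun x : Euc d => (x, x)) y hG'
      ((hasFDerivAt_id y).prodMk (hasFDerivAt_id y)))
  have hfun : (fun x => grad1 g x x) = Φ ∘ fderiv ℝ G ∘ fun x => (x, x) :=
    funext (grad1_diag_eq g hG)
  have hderiv : Φ.comp ((hessF g y y).comp diag) = L := by
    ext1 v
    refine ext_inner_right ℝ fun w => ?_
    simp [Φ, diag, InnerProductSpace.toDual_symm_apply, hL, hsymm]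
  rwa [hfun, ← hderiv]

def thirdMomentInf (p : Euc d → Euc d → ℝ) (y : Euc d) (α₀ : ℝ) : ℝ :=
  ⨅ q : Metric.closedBall y α₀ × Metric.sphere (0 : Euc d) 1 × Metric.sphere (0 : Euc d) 1,
    ∫ h : Euc d, |⟪h, (q.2.1 : Euc d)⟫| ^ 2 * |⟪h, (q.2.2 : Euc d)⟫| * p (q.1 : Euc d) h

section Kernel

variable {p : Euc d → Euc d → ℝ}

theorem abs_max_inner_zero_le (h w : Euc d) : |max ⟪h, w⟫ 0| ≤ ‖h‖ * ‖w‖ :=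
  abs_max_le_max_abs_abs.trans (by simpa using abs_real_inner_le_norm h w)

theorem IsMutKernel.measurable_apply (hker : IsMutKernel p) (x : Euc d) :
    Measurable (p x) :=
  hker.1.comp (measurable_const.prodMk measurable_id)

theorem integrable_mul_kernel_of_abs_le_mul_norm_pow_three (hker : IsMutKernel p) (hH2 : H2 p)
    (x : Euc d) {f : Euc d → ℝ} (hf : Continuous f) {c : ℝ}
    (hfc : ∀ h, |f h| ≤ c * ‖h‖ ^ 3) :
    Integrable fun h => f h * p x h := by
  refine ((hH2.1 x).const_mul c).mono'
    (hf.measurable.mul (hker.measurable_apply x)).aestronglyMeasurable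
    (Filter.Eventually.of_forall fun h => ?_)
  rw [norm_mul, Real.norm_eq_abs, Real.norm_of_nonneg (hker.2.1 x h), ← mul_assoc]
  exact mul_le_mul_of_nonneg_right (hfc h) (hker.2.1 x h)

theorem quadA_eq_integral (g : Euc d → Euc d → ℝ) (hker : IsMutKernel p) (hH2 : H2 p)
    (x s : Euc d) :
    quadA g p x s = ∫ h, ⟪h, s⟫ ^ 2 * p x h * max ⟪h, grad1 g x x⟫ 0 := by
  have hint : ∀ k l : Fin d, Integrable fun h : Euc d =>
      s k * (h k * h l * max ⟪h, grad1 g x x⟫ 0 * p x h) * s l := by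
    intro k l
    refine ((integrable_mul_kernel_of_abs_le_mul_norm_pow_three hker hH2 x
      (c := ‖grad1 g x x‖) (by fun_prop) fun h => ?_).const_mul (s k)).mul_const (s l)
    have hk := PiLp.norm_apply_le h k
    have hl := PiLp.norm_apply_le h l
    have hmax := abs_max_inner_zero_le h (grad1 g x x)
    rw [abs_mul, abs_mul]
    calc |h k| * |h l| * |max ⟪h, grad1 g x x⟫ 0| ≤ ‖h‖ * ‖h‖ * (‖h‖ * ‖grad1 g x x‖) := by
          gcongr <;> assumption
      _ = ‖grad1 g x x‖ * ‖h‖ ^ 3 := by ring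
  calc quadA g p x s
      = ∑ k, ∑ l, ∫ h, s k * (h k * h l * max ⟪h, grad1 g x x⟫ 0 * p x h) * s l := by
        simp only [quadA, aMat, Matrix.of_apply, integral_mul_const, integral_const_mul]
    _ = ∫ h, ∑ k, ∑ l, s k * (h k * h l * max ⟪h, grad1 g x x⟫ 0 * p x h) * s l := by
        rw [integral_finsetSum _ fun k _ => integrable_finsetSum _ fun l _ => hint k l]
        exact Finset.sum_congr rfl fun k _ => (integral_finsetSum _ fun l _ => hint k l).symm
    _ = ∫ h, ⟪h, s⟫ ^ 2 * p x h * max ⟪h, grad1 g x x⟫ 0 := by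
        congr 1 with h
        have hinner : ⟪h, s⟫ = ∑ k, h k * s k := by
          simp [PiLp.inner_apply, mul_comm]
        rw [hinner, sq, Finset.sum_mul_sum]
        simp only [Finset.sum_mul]
        exact Finset.sum_congr rfl fun k _ => Finset.sum_congr rfl fun l _ => by ring

theorem half_mul_norm_grad1_mul_sq_le_quadA {g : Euc d → Euc d → ℝ} (hker : IsMutKernel p)
    (hH2 : H2 p) {x : Euc d} {C : ℝ}
    (hC : ∀ u v : Euc d, ‖u‖ = 1 → ‖v‖ = 1 → C ≤ ∫ h, |⟪h, u⟫| ^ 2 * |⟪h, v⟫| * p x h)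
    (s : Euc d) :
    C / 2 * ‖grad1 g x x‖ * ‖s‖ ^ 2 ≤ quadA g p x s := by
  set w := grad1 g x x
  have hint : Integrable fun h => ⟪h, s⟫ ^ 2 * p x h * max ⟪h, w⟫ 0 := by
    simp_rw [mul_right_comm _ (p x _)]
    refine integrable_mul_kernel_of_abs_le_mul_norm_pow_three hker hH2 x
      (c := ‖s‖ ^ 2 * ‖w‖) (by fun_prop) fun h => ?_
    have hs : ⟪h, s⟫ ^ 2 ≤ (‖h‖ * ‖s‖) ^ 2 := by
      rw [← sq_abs]
      exact pow_le_pow_left₀ (abs_nonneg _) (abs_real_inner_le_norm h s) 2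
    rw [abs_mul, abs_sq]
    calc ⟪h, s⟫ ^ 2 * |max ⟪h, w⟫ 0| ≤ (‖h‖ * ‖s‖) ^ 2 * (‖h‖ * ‖w‖) := by
          gcongr
          exact abs_max_inner_zero_le h w
      _ = ‖s‖ ^ 2 * ‖w‖ * ‖h‖ ^ 3 := by ring
  rw [quadA_eq_integral g hker hH2, integral_mul_max_inner_zero_of_even
    (fun h => by rw [inner_neg_left, neg_sq, hker.2.2.2.2]) w hint]
  linarith [mul_le_integral_sq_inner_mul_abs_inner hC s w]

theorem integral_sq_abs_inner_mul_abs_inner_nonneg (hp : ∀ x h, 0 ≤ p x h) (x u v : Euc d) :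
    0 ≤ ∫ h, |⟪h, u⟫| ^ 2 * |⟪h, v⟫| * p x h :=
  integral_nonneg fun h => mul_nonneg (by positivity) (hp x h)

theorem thirdMomentInf_nonneg (hp : ∀ x h, 0 ≤ p x h) (y : Euc d) (α₀ : ℝ) :
    0 ≤ thirdMomentInf p y α₀ :=
  Real.iInf_nonneg fun _ => integral_sq_abs_inner_mul_abs_inner_nonneg hp _ _ _

theorem thirdMomentInf_le (hp : ∀ x h, 0 ≤ p x h) {y x : Euc d} {α₀ : ℝ}
    (hx : x ∈ Metric.closedBall y α₀) {u v : Euc d} (hu : ‖u‖ = 1) (hv : ‖v‖ = 1) :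
    thirdMomentInf p y α₀ ≤ ∫ h, |⟪h, u⟫| ^ 2 * |⟪h, v⟫| * p x h :=
  ciInf_le (f := fun q : Metric.closedBall y α₀ ×
      Metric.sphere (0 : Euc d) 1 × Metric.sphere (0 : Euc d) 1 =>
        ∫ h : Euc d, |⟪h, (q.2.1 : Euc d)⟫| ^ 2 * |⟪h, (q.2.2 : Euc d)⟫| * p (q.1 : Euc d) h)
    ⟨0, by rintro _ ⟨q, rfl⟩; exact integral_sq_abs_inner_mul_abs_inner_nonneg hp _ _ _⟩
    (⟨x, hx⟩, ⟨u, by simpa using hu⟩, ⟨v, by simpa using hv⟩)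

end Kernel

theorem stmt9_general {d : ℕ} (g p : Euc d → Euc d → ℝ)
    (hker : IsMutKernel p) (hH2 : H2 p)
    (hg2 : ContDiff ℝ 2 (fun q : Euc d × Euc d => g q.1 q.2))
    (y : Euc d) (hy : y ∈ Gam g) (α₀ : ℝ) (hα₀ : 0 < α₀)
    -- `L` is the matrix `D = H₁₁g(y,y) + H₁₂g(y,y)`, characterized by
    -- `⟪L v, w⟫ = wᵀ H₁₁g(y,y) v + wᵀ H₁₂g(y,y) v`
    (L : Euc d →L[ℝ] Euc d)
    (hL : ∀ v w : Euc d, ⟪L v, w⟫ = hessF g y y (w, 0) (v, v))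
    -- `lam` is the smallest eigenvalue of `DᵀD`, characterized via the Rayleigh quotient
    (lam : ℝ)
    (hlam1 : ∀ v : Euc d, lam * ‖v‖ ^ 2 ≤ ‖L v‖ ^ 2) :
    ∀ δ : ℝ, 0 < δ → ∃ U ∈ nhds y, ∀ x ∈ U, ∀ s : Euc d,
      ((⨅ q : Metric.closedBall y α₀ ×
            Metric.sphere (0 : Euc d) 1 × Metric.sphere (0 : Euc d) 1,
          ∫ h : Euc d, |⟪h, (q.2.1 : Euc d)⟫| ^ 2 * |⟪h, (q.2.2 : Euc d)⟫|
            * p (q.1 : Euc d) h)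
          * Real.sqrt lam / 2 - δ) * ‖x - y‖ * ‖s‖ ^ 2 ≤ quadA g p x s := by
  intro δ hδ
  rw [← thirdMomentInf.eq_1]
  set C := thirdMomentInf p y α₀
  have hC0 : 0 ≤ C := thirdMomentInf_nonneg hker.2.1 y α₀
  obtain ⟨ε, hε, hCε⟩ : ∃ ε > 0, C * ε ≤ δ := ⟨δ / (C + 1), by positivity, by
    rw [mul_div_assoc', div_le_iff₀ (by positivity)]
    nlinarith⟩
  have hL' : ∀ v, Real.sqrt lam * ‖v‖ ≤ ‖L v‖ := fun v => by
    simpa [Real.sqrt_mul' lam (sq_nonneg ‖v‖)] using Real.sqrt_le_sqrt (hlam1 v)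
  have hgrowth := (hasFDerivAt_grad1_diag hg2 y L hL).eventually_sub_mul_norm_le_norm_sub hL' hε
  simp only [show grad1 g y y = 0 from hy, sub_zero] at hgrowth
  refine ⟨_, Filter.inter_mem hgrowth (Metric.closedBall_mem_nhds y hα₀), ?_⟩
  rintro x ⟨hx, hxy⟩ s
  calc (C * Real.sqrt lam / 2 - δ) * ‖x - y‖ * ‖s‖ ^ 2
      ≤ C / 2 * ((Real.sqrt lam - ε) * ‖x - y‖) * ‖s‖ ^ 2 := by
        gcongr ?_ * _
        nlinarith [norm_nonneg (x - y)]
    _ ≤ C / 2 * ‖grad1 g x x‖ * ‖s‖ ^ 2 := by gcongr; exact hx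
    _ ≤ quadA g p x s := half_mul_norm_grad1_mul_sq_le_quadA hker hH2
        (fun _ _ => thirdMomentInf_le hker.2.1 hxy) s

theorem stmt9 {d : ℕ} (hd : 1 ≤ d) (g p : Euc d → Euc d → ℝ)
    (hker : IsMutKernel p) (hH1 : H1 g) (hH2 : H2 p)
    (hg2 : ContDiff ℝ 2 (fun q : Euc d × Euc d => g q.1 q.2))
    (y : Euc d) (hy : y ∈ Gam g) (α₀ : ℝ) (hα₀ : 0 < α₀)
    (hball : Metric.closedBall y α₀ ∩ Gam g = {y})
    -- `L` is the matrix `D = H₁₁g(y,y) + H₁₂g(y,y)`, characterized by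
    -- `⟪L v, w⟫ = wᵀ H₁₁g(y,y) v + wᵀ H₁₂g(y,y) v`
    (L : Euc d →L[ℝ] Euc d)
    (hL : ∀ v w : Euc d, ⟪L v, w⟫ = hessF g y y (w, 0) (v, v))
    (hLinv : Function.Bijective L)
    -- `lam` is the smallest eigenvalue of `DᵀD`, characterized via the Rayleigh quotient
    (lam : ℝ) (hlam : 0 < lam)
    (hlam1 : ∀ v : Euc d, lam * ‖v‖ ^ 2 ≤ ‖L v‖ ^ 2)
    (hlam2 : ∃ v : Euc d, v ≠ 0 ∧ ‖L v‖ ^ 2 = lam * ‖v‖ ^ 2) :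
    ∀ δ : ℝ, 0 < δ → ∃ U ∈ nhds y, ∀ x ∈ U, ∀ s : Euc d,
      ((⨅ q : Metric.closedBall y α₀ ×
            Metric.sphere (0 : Euc d) 1 × Metric.sphere (0 : Euc d) 1,
          ∫ h : Euc d, |⟪h, (q.2.1 : Euc d)⟫| ^ 2 * |⟪h, (q.2.2 : Euc d)⟫|
            * p (q.1 : Euc d) h)
          * Real.sqrt lam / 2 - δ) * ‖x - y‖ * ‖s‖ ^ 2 ≤ quadA g p x s :=
  stmt9_general g p hker hH2 hg2 y hy α₀ hα₀ L hL lam hlam1
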